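/- arXiv:2502.06558 — 6 statements merged into one kernel-verified Lean document; each statement's English description precedes it below -/
import Mathlib

section
/- Let c be a greedy coloring of a graph G. For any vertex x and any neighbor p of x, if S is the set of neighbors of x whose color exceeds c(p), then c(x) ≤ c(p) + |S| + 1. -/
/-! Greedy coloring gives `x` the least color not worn by an earlier neighbor, so every color
strictly between `c p` and `c x` is worn by some neighbor of `x`, which then lies in `S`.
Hence `S` takes at least `c x - c p - 1` distinct colors. -/

theorem Nat.le_add_card_add_one_of_Ioo_subset_image {α : Type*} {s : Finset α} (f : α → ℕ)
    {a b : ℕ} (h : Finset.Ioo a b ⊆ s.image f) : b ≤ a + s.card + 1 := by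
  have := (Finset.card_le_card h).trans Finset.card_image_le
  rw [Nat.card_Ioo] at this
  omega

theorem exists_adj_of_lt_greedy_color {V : Type*} {G : SimpleGraph V} {ord : V → ℕ}
    {c : V → ℕ} {v : V}
    (hv : c v = sInf {n : ℕ | 1 ≤ n ∧ ∀ w, G.Adj v w → ord w < ord v → c w ≠ n})
    {n : ℕ} (hn₁ : 1 ≤ n) (hn : n < c v) : ∃ w, G.Adj v w ∧ ord w < ord v ∧ c w = n := by
  rw [hv] at hn
  simpa only [Set.mem_ofPred_eq, hn₁, true_and, not_forall, not_not, exists_prop]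
    using Nat.notMem_of_lt_sInf hn

theorem stmt1_general {V : Type*} [Fintype V] (G : SimpleGraph V)
    [DecidableRel G.Adj] (ord : V → ℕ)
    (c : V → ℕ)
    (hc : ∀ v, c v = sInf {n : ℕ | 1 ≤ n ∧ ∀ w, G.Adj v w → ord w < ord v → c w ≠ n})
    (x p : V) :
    c x ≤ c p + (Finset.univ.filter (fun w => G.Adj x w ∧ c p < c w)).card + 1 := by
  refine Nat.le_add_card_add_one_of_Ioo_subset_image c fun n hn => ?_
  rw [Finset.mem_Ioo] at hn
  obtain ⟨w, hxw, -, rfl⟩ := exists_adj_of_lt_greedy_color (hc x) (by omega) hn.2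
  exact Finset.mem_image_of_mem c (by simp [hxw, hn.1])

/-- Pivot bound: for a neighbor `p` of `x`, the greedy color of `x` is at most
`c p` plus the number of neighbors of `x` with color exceeding `c p`, plus 1. -/
theorem stmt1 {V : Type*} [Fintype V] [DecidableEq V] (G : SimpleGraph V)
    [DecidableRel G.Adj] (ord : V → ℕ) (hord : Function.Injective ord)
    (c : V → ℕ)
    (hc : ∀ v, c v = sInf {n : ℕ | 1 ≤ n ∧ ∀ w, G.Adj v w → ord w < ord v → c w ≠ n})
    (x p : V) (hp : G.Adj x p) :
    c x ≤ c p + (Finset.univ.filter (fun w => G.Adj x w ∧ c p < c w)).card + 1 :=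
  stmt1_general G ord c hc x p
end

section
/- If three pairwise-disjoint unit intervals (each open or closed) all intersect the closed unit interval [a, a+1], then, listed left to right, they are exactly the closed interval [a-1, a], the open interval (a, a+1), and the closed interval [a+1, a+2]. -/
/-!
Write each interval as `[r, r+1]` or `(r, r+1)`. Disjoint unit intervals have left endpoints
at distance at least `1`, and meeting `[a, a+1]` forces `r ∈ [a-1, a+1]`; so the sorted left
endpoints are `a-1, a, a+1`. The outer two intervals meet `[a, a+1]` only at an endpoint and
must therefore be closed, and then the middle one must omit `a`, so it is open.
-/

open Set Function

def IsUnitInterval (s : Set ℝ) : Prop :=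
  ∃ r : ℝ, s = Set.Icc r (r + 1) ∨ s = Set.Ioo r (r + 1)

def IsUnitIntervalFrom (r : ℝ) (s : Set ℝ) : Prop :=
  s = Icc r (r + 1) ∨ s = Ioo r (r + 1)

namespace IsUnitIntervalFrom

variable {r q : ℝ} {s t : Set ℝ}

lemma Ioo_subset (hs : IsUnitIntervalFrom r s) : Ioo r (r + 1) ⊆ s := by
  rcases hs with rfl | rfl
  exacts [Ioo_subset_Icc_self, subset_rfl]

lemma subset_Icc (hs : IsUnitIntervalFrom r s) : s ⊆ Icc r (r + 1) := by
  rcases hs with rfl | rfl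
  exacts [subset_rfl, Ioo_subset_Icc_self]

lemma add_one_le_or_add_one_le (hs : IsUnitIntervalFrom r s) (ht : IsUnitIntervalFrom q t)
    (hst : s ∩ t = ∅) : r + 1 ≤ q ∨ q + 1 ≤ r := by
  by_contra! h
  have hne : (Ioo r (r + 1) ∩ Ioo q (q + 1)).Nonempty := by
    rw [Ioo_inter_Ioo, nonempty_Ioo, max_lt_iff, lt_min_iff, lt_min_iff]
    refine ⟨⟨?_, ?_⟩, ?_, ?_⟩ <;> linarith
  exact (hne.mono (inter_subset_inter hs.Ioo_subset ht.Ioo_subset)).ne_empty hst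

lemma mem_Icc_of_inter_Icc_nonempty {a : ℝ} (hs : IsUnitIntervalFrom r s)
    (h : (s ∩ Icc a (a + 1)).Nonempty) : r ∈ Icc (a - 1) (a + 1) := by
  obtain ⟨x, hxs, hxa, hxa'⟩ := h
  obtain ⟨hrx, hxr⟩ := hs.subset_Icc hxs
  constructor <;> linarith

lemma eq_Icc_of_add_one_mem (hs : IsUnitIntervalFrom r s) (h : r + 1 ∈ s) :
    s = Icc r (r + 1) :=
  hs.resolve_right fun hs' => by simp [hs'] at h

lemma eq_Icc_of_mem (hs : IsUnitIntervalFrom r s) (h : r ∈ s) : s = Icc r (r + 1) :=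
  hs.resolve_right fun hs' => by simp [hs'] at h

lemma eq_Ioo_of_notMem (hs : IsUnitIntervalFrom r s) (h : r ∉ s) : s = Ioo r (r + 1) :=
  hs.resolve_left fun hs' => h (hs' ▸ left_mem_Icc.2 (by linarith))

end IsUnitIntervalFrom

open IsUnitIntervalFrom

lemma eq_Icc_Ioo_Icc_of_strictMono {a : ℝ} {s : Fin 3 → Set ℝ} {r : Fin 3 → ℝ}
    (hr : ∀ i, IsUnitIntervalFrom (r i) (s i)) (hmono : StrictMono r)
    (hdisj : ∀ i j, i ≠ j → s i ∩ s j = ∅) (hint : ∀ i, (s i ∩ Icc a (a + 1)).Nonempty) :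
    s 0 = Icc (a - 1) a ∧ s 1 = Ioo a (a + 1) ∧ s 2 = Icc (a + 1) (a + 2) := by
  have hgap : ∀ i j, i < j → r i + 1 ≤ r j := fun i j hij =>
    ((hr i).add_one_le_or_add_one_le (hr j) (hdisj i j hij.ne)).resolve_right fun h => by
      linarith [hmono hij]
  obtain ⟨hr0, -⟩ := (hr 0).mem_Icc_of_inter_Icc_nonempty (hint 0)
  obtain ⟨-, hr2⟩ := (hr 2).mem_Icc_of_inter_Icc_nonempty (hint 2)
  have h01 := hgap 0 1 (by decide)
  have h12 := hgap 1 2 (by decide)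
  have e0 : r 0 = a - 1 := by linarith
  have e1 : r 1 = a := by linarith
  have e2 : r 2 = a + 1 := by linarith
  -- `s 0 ⊆ [a-1, a]` and `s 2 ⊆ [a+1, a+2]` meet `[a, a+1]` only at `a`, resp. `a + 1`.
  have hs0 : s 0 = Icc (a - 1) a := by
    obtain ⟨x, hx0, hax, -⟩ := hint 0
    obtain ⟨-, hx⟩ := (hr 0).subset_Icc hx0
    have hxa : x = r 0 + 1 := by linarith
    rw [(hr 0).eq_Icc_of_add_one_mem (hxa ▸ hx0), e0, sub_add_cancel]
  have hs2 : s 2 = Icc (a + 1) (a + 2) := by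
    obtain ⟨x, hx2, -, hax⟩ := hint 2
    obtain ⟨hx, -⟩ := (hr 2).subset_Icc hx2
    have hxa : x = r 2 := by linarith
    rw [(hr 2).eq_Icc_of_mem (hxa ▸ hx2), e2]
    norm_num [add_assoc]
  have ha : a ∉ s 1 := fun ha =>
    (hdisj 0 1 (by decide)).subset ⟨by rw [hs0]; exact right_mem_Icc.2 (by linarith), ha⟩
  refine ⟨hs0, ?_, hs2⟩
  rw [(hr 1).eq_Ioo_of_notMem (e1 ▸ ha), e1]

lemma range_fin_three {α : Type*} (f : Fin 3 → α) : range f = {f 0, f 1, f 2} := by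
  ext
  simp [Fin.exists_fin_succ, eq_comm]

/-- Three pairwise-disjoint open/closed unit intervals all intersecting the
closed unit interval `[a, a+1]` are exactly `[a-1, a]`, `(a, a+1)`, `[a+1, a+2]`. -/
theorem stmt4 (a : ℝ) (s : Fin 3 → Set ℝ)
    (hunit : ∀ i, IsUnitInterval (s i))
    (hdisj : ∀ i j, i ≠ j → s i ∩ s j = ∅)
    (hint : ∀ i, (s i ∩ Set.Icc a (a + 1)).Nonempty) :
    ({s 0, s 1, s 2} : Set (Set ℝ)) =
      {Set.Icc (a - 1) a, Set.Ioo a (a + 1), Set.Icc (a + 1) (a + 2)} := by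
  choose r hr using hunit
  replace hr : ∀ i, IsUnitIntervalFrom (r i) (s i) := hr
  have hinj : Injective r := fun i j hij => by
    by_contra hne
    rcases (hr i).add_one_le_or_add_one_le (hr j) (hdisj i j hne) with h | h <;> linarith
  set σ := Tuple.sort r
  have hmono : StrictMono (r ∘ σ) :=
    (Tuple.monotone_sort r).strictMono_of_injective (hinj.comp σ.injective)
  obtain ⟨h0, h1, h2⟩ := eq_Icc_Ioo_Icc_of_strictMono (s := s ∘ σ) (fun i => hr (σ i)) hmono
    (fun i j hij => hdisj _ _ (σ.injective.ne hij)) (fun i => hint (σ i))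
  rw [← range_fin_three, ← EquivLike.range_comp s σ, range_fin_three, h0, h1, h2]
end

section
/- Suppose a set of open/closed unit intervals admits a proper coloring with ω colors. Then for any interval x in the set, the number of intervals (other than x) intersecting x is at most 3ω - 3. -/
/-!
Write each interval `f j` as `[r j, r j + 1]` or `(r j, r j + 1)`. The neighbors of `x` have left
endpoints in `[r x - 1, r x + 1]`, which is covered by three half-open windows of length one, and
two intervals whose left endpoints lie in a common such window intersect. So the neighbors in one
window together with `x` form a clique, which a proper coloring with `ω` colors injects into
`Fin ω`: each window holds at most `ω - 1` neighbors.
-/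

open Set

theorem IsUnitInterval.exists_Ioo_subset_subset_Icc {s : Set ℝ} (h : IsUnitInterval s) :
    ∃ r : ℝ, Ioo r (r + 1) ⊆ s ∧ s ⊆ Icc r (r + 1) := by
  obtain ⟨r, rfl | rfl⟩ := h
  · exact ⟨r, Ioo_subset_Icc_self, subset_rfl⟩
  · exact ⟨r, subset_rfl, Ioo_subset_Icc_self⟩

theorem Real.Ioo_inter_Ioo_add_one_nonempty {a b : ℝ} (h : |a - b| < 1) :
    (Ioo a (a + 1) ∩ Ioo b (b + 1)).Nonempty := by
  rw [Ioo_inter_Ioo, nonempty_Ioo, max_lt_iff, lt_min_iff, lt_min_iff]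
  rw [abs_sub_lt_iff] at h
  refine ⟨⟨?_, ?_⟩, ?_, ?_⟩ <;> linarith

theorem Real.abs_sub_le_one_of_Icc_inter_Icc_nonempty {a b : ℝ}
    (h : (Icc a (a + 1) ∩ Icc b (b + 1)).Nonempty) : |a - b| ≤ 1 := by
  rw [Icc_inter_Icc, nonempty_Icc, max_le_iff, le_min_iff, le_min_iff] at h
  rw [abs_sub_le_iff]
  constructor <;> linarith [h.1.1, h.2.2]

theorem Real.Icc_sub_one_add_one_subset_union_Ico (c : ℝ) :
    Icc (c - 1) (c + 1) ⊆
      Ico (c - 1) c ∪ Ico (c - 1 / 2) (c + 1 / 2) ∪ Ico (c + 1 / 2) (c + 3 / 2) := by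
  rintro t ⟨h₁, h₂⟩
  simp only [mem_union, mem_Ico]
  by_cases ht : t < c - 1 / 2
  · exact Or.inl (Or.inl ⟨h₁, by linarith⟩)
  by_cases ht' : t < c + 1 / 2
  · exact Or.inl (Or.inr ⟨by linarith, ht'⟩)
  · exact Or.inr ⟨by linarith, by linarith⟩

theorem Set.Pairwise.injOn_of_coloring {ι α : Type*} {R : ι → ι → Prop} {C : ι → α}
    (hC : ∀ i j, i ≠ j → R i j → C i ≠ C j) {T : Set ι} (hT : T.Pairwise R) :
    InjOn C T :=
  fun i hi j hj hij => by_contra fun hne => hC i j hne (hT hi hj hne) hij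

theorem Set.Pairwise.finite_and_ncard_le_of_coloring {ι α : Type*} [Finite α]
    {R : ι → ι → Prop} {C : ι → α} (hC : ∀ i j, i ≠ j → R i j → C i ≠ C j) {T : Set ι}
    (hT : T.Pairwise R) : T.Finite ∧ T.ncard ≤ Nat.card α := by
  have hinj := hT.injOn_of_coloring hC
  refine ⟨Finite.of_finite_image (toFinite _) hinj, ?_⟩
  calc T.ncard ≤ (univ : Set α).ncard :=
      ncard_le_ncard_of_injOn C (fun _ _ => mem_univ _) hinj
    _ = Nat.card α := ncard_univ α

section UnitIntervals

variable {ι : Type*} {f : ι → Set ℝ} {r : ι → ℝ}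
  (hr : ∀ i, Ioo (r i) (r i + 1) ⊆ f i ∧ f i ⊆ Icc (r i) (r i + 1))
include hr

theorem inter_nonempty_of_abs_sub_lt_one {i j : ι} (h : |r i - r j| < 1) :
    (f i ∩ f j).Nonempty :=
  (Real.Ioo_inter_Ioo_add_one_nonempty h).mono (inter_subset_inter (hr i).1 (hr j).1)

theorem abs_sub_le_one_of_inter_nonempty {i j : ι} (h : (f i ∩ f j).Nonempty) :
    |r i - r j| ≤ 1 :=
  Real.abs_sub_le_one_of_Icc_inter_Icc_nonempty (h.mono (inter_subset_inter (hr i).2 (hr j).2))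

theorem pairwise_inter_nonempty_of_mapsTo_Ico {T : Set ι} {a b : ℝ} (hab : b ≤ a + 1)
    (hT : MapsTo r T (Ico a b)) : T.Pairwise fun i j => (f i ∩ f j).Nonempty := by
  intro i hi j hj _
  obtain ⟨hi₁, hi₂⟩ := hT hi
  obtain ⟨hj₁, hj₂⟩ := hT hj
  exact inter_nonempty_of_abs_sub_lt_one hr (abs_sub_lt_iff.2 ⟨by linarith, by linarith⟩)

theorem neighbors_mapsTo_Icc (x : ι) :
    MapsTo r {j | j ≠ x ∧ (f j ∩ f x).Nonempty} (Icc (r x - 1) (r x + 1)) := fun j hj => by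
  have h := abs_sub_le_iff.1 (abs_sub_le_one_of_inter_nonempty hr hj.2)
  exact ⟨by linarith [h.2], by linarith [h.1]⟩

theorem neighbors_inter_preimage_Ico_finite_and_ncard_le {α : Type*} [Finite α] {C : ι → α}
    (hC : ∀ i j, i ≠ j → (f i ∩ f j).Nonempty → C i ≠ C j) (x : ι) (a b : ℝ)
    (hab : b ≤ a + 1) :
    ({j | j ≠ x ∧ (f j ∩ f x).Nonempty} ∩ r ⁻¹' Ico a b).Finite ∧
      ({j | j ≠ x ∧ (f j ∩ f x).Nonempty} ∩ r ⁻¹' Ico a b).ncard ≤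
        Nat.card α - 1 := by
  set B := {j | j ≠ x ∧ (f j ∩ f x).Nonempty} ∩ r ⁻¹' Ico a b
  have hxB : x ∉ B := fun h => h.1.1 rfl
  have hclique : (insert x B).Pairwise fun i j => (f i ∩ f j).Nonempty :=
    (pairwise_inter_nonempty_of_mapsTo_Ico hr hab fun _ hj => hj.2).insert
      fun _ hj _ => ⟨inter_comm (f _) _ ▸ hj.1.2, hj.1.2⟩
  obtain ⟨hfin, hcard⟩ := hclique.finite_and_ncard_le_of_coloring hC
  have hB : B.Finite := hfin.subset (subset_insert x B)
  rw [ncard_insert_of_notMem hxB hB] at hcard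
  exact ⟨hB, by omega⟩

end UnitIntervals

/-- If a family of open/closed unit intervals admits a proper coloring with
`ω` colors, then every interval intersects at most `3ω - 3` other intervals. -/
theorem stmt5 {ι : Type*} (f : ι → Set ℝ)
    (hunit : ∀ i, IsUnitInterval (f i)) (ω : ℕ) (C : ι → Fin ω)
    (hC : ∀ i j, i ≠ j → (f i ∩ f j).Nonempty → C i ≠ C j) (x : ι) :
    {j | j ≠ x ∧ (f j ∩ f x).Nonempty}.Finite ∧
      {j | j ≠ x ∧ (f j ∩ f x).Nonempty}.ncard ≤ 3 * ω - 3 := by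
  choose r hr using fun i => (hunit i).exists_Ioo_subset_subset_Icc
  have band := neighbors_inter_preimage_Ico_finite_and_ncard_le hr hC x
  rw [Nat.card_fin] at band
  obtain ⟨h₁, c₁⟩ := band (r x - 1) (r x) (by linarith)
  obtain ⟨h₂, c₂⟩ := band (r x - 1 / 2) (r x + 1 / 2) (by linarith)
  obtain ⟨h₃, c₃⟩ := band (r x + 1 / 2) (r x + 3 / 2) (by linarith)
  set N := {j | j ≠ x ∧ (f j ∩ f x).Nonempty}
  set B₁ := N ∩ r ⁻¹' Ico (r x - 1) (r x)
  set B₂ := N ∩ r ⁻¹' Ico (r x - 1 / 2) (r x + 1 / 2)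
  set B₃ := N ∩ r ⁻¹' Ico (r x + 1 / 2) (r x + 3 / 2)
  have hcover : N ⊆ B₁ ∪ B₂ ∪ B₃ := fun j hj => by
    rcases Real.Icc_sub_one_add_one_subset_union_Ico (r x) (neighbors_mapsTo_Icc hr x hj)
      with (h | h) | h
    exacts [Or.inl (Or.inl ⟨hj, h⟩), Or.inl (Or.inr ⟨hj, h⟩), Or.inr ⟨hj, h⟩]
  have hfin := (h₁.union h₂).union h₃
  refine ⟨hfin.subset hcover, ?_⟩
  calc N.ncard ≤ (B₁ ∪ B₂ ∪ B₃).ncard := ncard_le_ncard hcover hfin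
    _ ≤ B₁.ncard + B₂.ncard + B₃.ncard :=
      (ncard_union_le _ _).trans (Nat.add_le_add_right (ncard_union_le _ _) _)
    _ ≤ 3 * ω - 3 := by omega
end

section
/- Suppose a set of open/closed unit intervals admits a proper coloring with ω colors, and x is an open unit interval in the set. Then the number of intervals (other than x) intersecting x is at most 2ω - 2. -/
open Set

theorem IsUnitInterval.left_mem_or_right_mem_or_eq {s : Set ℝ} (hs : IsUnitInterval s) {a : ℝ}
    (h : (s ∩ Ioo a (a + 1)).Nonempty) : a ∈ s ∨ a + 1 ∈ s ∨ s = Ioo a (a + 1) := by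
  obtain ⟨t, hts, hta, hta'⟩ := h
  obtain ⟨r, rfl | rfl⟩ := hs
  · obtain ⟨hrt, htr⟩ := hts
    rcases le_or_gt r a with hra | hra
    · exact Or.inl ⟨hra, by linarith⟩
    · exact Or.inr (Or.inl ⟨by linarith, by linarith⟩)
  · obtain ⟨hrt, htr⟩ := hts
    rcases lt_trichotomy r a with hra | rfl | hra
    · exact Or.inl ⟨hra, by linarith⟩
    · exact Or.inr (Or.inr rfl)
    · exact Or.inr (Or.inl ⟨by linarith, by linarith⟩)

theorem Set.Pairwise.injOn_of_ne {ι α : Type*} {R : ι → ι → Prop} {C : ι → α}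
    (hC : ∀ i j, i ≠ j → R i j → C i ≠ C j) {S : Set ι} (hS : S.Pairwise R) : S.InjOn C :=
  fun i hi j hj hij => by_contra fun hne => hC i j hne (hS hi hj hne) hij

theorem Set.finite_and_ncard_lt_of_injOn_insert {ι α : Type*} [Finite α] {C : ι → α} {x : ι}
    {S : Set ι} (hxS : x ∉ S) (hinj : (insert x S).InjOn C) :
    S.Finite ∧ S.ncard < Nat.card α := by
  have hfin : (insert x S).Finite := Finite.of_finite_image (toFinite _) hinj
  have hcard : (insert x S).ncard ≤ Nat.card α := by
    rw [← hinj.ncard_image]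
    exact ncard_le_card _
  rw [ncard_insert_of_notMem hxS (hfin.subset (subset_insert x S))] at hcard
  exact ⟨hfin.subset (subset_insert x S), hcard⟩

theorem clique_finite_and_ncard_lt {ι α β : Type*} [Finite α] (f : ι → Set β) (C : ι → α)
    (hC : ∀ i j, i ≠ j → (f i ∩ f j).Nonempty → C i ≠ C j) {x : ι} {S : Set ι}
    (hSx : ∀ j ∈ S, j ≠ x ∧ (f j ∩ f x).Nonempty)
    (hS : S.Pairwise fun i j => (f i ∩ f j).Nonempty) :
    S.Finite ∧ S.ncard < Nat.card α := by
  have hpair : (insert x S).Pairwise fun i j => (f i ∩ f j).Nonempty :=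
    pairwise_insert.2 ⟨hS, fun j hj _ => ⟨inter_comm (f j) (f x) ▸ (hSx j hj).2, (hSx j hj).2⟩⟩
  exact finite_and_ncard_lt_of_injOn_insert (fun hx => (hSx x hx).1 rfl) (hpair.injOn_of_ne hC)

/-- If a family of open/closed unit intervals admits a proper coloring with
`ω` colors and `x` is an open unit interval in the family, then `x` intersects
at most `2ω - 2` other intervals. -/
theorem stmt6 {ι : Type*} (f : ι → Set ℝ)
    (hunit : ∀ i, IsUnitInterval (f i)) (ω : ℕ) (C : ι → Fin ω)
    (hC : ∀ i j, i ≠ j → (f i ∩ f j).Nonempty → C i ≠ C j) (x : ι)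
    (hx : ∃ a : ℝ, f x = Set.Ioo a (a + 1)) :
    {j | j ≠ x ∧ (f j ∩ f x).Nonempty}.Finite ∧
      {j | j ≠ x ∧ (f j ∩ f x).Nonempty}.ncard ≤ 2 * ω - 2 := by
  obtain ⟨a, ha⟩ := hx
  set N := {j | j ≠ x ∧ (f j ∩ f x).Nonempty}
  set S₁ := {j ∈ N | a ∈ f j ∨ f j = f x}
  set S₂ := {j ∈ N | a + 1 ∈ f j}
  have hcover : N ⊆ S₁ ∪ S₂ := fun j hj => by
    rcases (hunit j).left_mem_or_right_mem_or_eq (ha ▸ hj.2) with h | h | h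
    · exact Or.inl ⟨hj, Or.inl h⟩
    · exact Or.inr ⟨hj, h⟩
    · exact Or.inl ⟨hj, Or.inr (h.trans ha.symm)⟩
  have hclique₁ : S₁.Pairwise fun i j => (f i ∩ f j).Nonempty := fun i hi j hj _ => by
    rcases hj.2 with hja | hjx
    · rcases hi.2 with hia | hix
      · exact ⟨a, hia, hja⟩
      · rw [hix, inter_comm]
        exact hj.1.2
    · rw [hjx]
      exact hi.1.2
  have hclique₂ : S₂.Pairwise fun i j => (f i ∩ f j).Nonempty :=
    fun i hi j hj _ => ⟨a + 1, hi.2, hj.2⟩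
  obtain ⟨hfin₁, hcard₁⟩ := clique_finite_and_ncard_lt f C hC (fun j hj => hj.1) hclique₁
  obtain ⟨hfin₂, hcard₂⟩ := clique_finite_and_ncard_lt f C hC (fun j hj => hj.1) hclique₂
  refine ⟨(hfin₁.union hfin₂).subset hcover, ?_⟩
  have := ncard_le_ncard hcover (hfin₁.union hfin₂)
  have := ncard_union_le S₁ S₂
  rw [Nat.card_fin] at hcard₁ hcard₂
  omega
end

section
/- Let I be a set of open/closed unit intervals with integral endpoints that is properly colorable with ω colors. Then any FirstFit coloring of I assigns every interval a color at most 2ω. -/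
/-!
Write `A j` and `B j` for the sets of FirstFit colors of the closed, resp. open, unit intervals
with left endpoint `j`. Every color below that of an interval occurs on a neighbour of it, and
`A j ∪ A (j + 1)` and `A j ∪ B j` are colors of cliques, hence have at most `ω` elements. An open
interval only meets intervals with its own left endpoint, so its color is at most `ω`.
For a closed interval `[j, j + 1]` of color `v`, let `s` be the largest color `≤ v` in a
neighbouring column `A i`, `i = j ± 1`, or `ω` if there is none larger. As colors above `ω` are
not on open intervals, `[1, v] ⊆ A j ∪ [1, s]`. If `s = ω` this gives `v ≤ 2 ω`. Otherwise
`[1, v]` is covered both by the colors around `[j, j + 1]` and by `A j` together with the colors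
around the interval of color `s`; adding the two covering bounds and regrouping the sum into four
clique bounds gives `2 v ≤ 4 ω`.
-/

open Set

lemma Set.encard_add_encard_sdiff {α : Type*} (s t : Set α) :
    s.encard + (t \ s).encard = (s ∪ t).encard := by
  rw [← encard_union_eq disjoint_sdiff_right, union_sdiff_self]

lemma Set.encard_union_union_union_le {α : Type*} (s t u w : Set α) :
    (s ∪ t ∪ u ∪ w).encard ≤ s.encard + t.encard + u.encard + w.encard := by
  grw [encard_union_le, encard_union_le, encard_union_le]

lemma Set.encard_Icc_one (v : ℕ) : (Icc 1 v).encard = v := by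
  rw [← Finset.coe_Icc, encard_coe_eq_coe_finsetCard, Nat.card_Icc, Nat.add_sub_cancel]

lemma le_two_mul_of_Icc_subset {v ω : ℕ} {A P Q R O S : Set ℕ}
    (h₁ : Icc 1 v ⊆ A ∪ Q ∪ P ∪ R) (h₂ : Icc 1 v ⊆ A ∪ Q ∪ O ∪ S)
    (hAP : (A ∪ P).encard ≤ ω) (hAR : (A ∪ R).encard ≤ ω)
    (hQO : (Q ∪ O).encard ≤ ω) (hQS : (Q ∪ S).encard ≤ ω) :
    v ≤ 2 * ω := by
  have h₁' : Icc 1 v ⊆ A ∪ Q ∪ (P \ A) ∪ (R \ A) := fun m hm => by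
    have := h₁ hm; simp only [mem_union, mem_sdiff] at this ⊢; tauto
  have h₂' : Icc 1 v ⊆ A ∪ Q ∪ (O \ Q) ∪ (S \ Q) := fun m hm => by
    have := h₂ hm; simp only [mem_union, mem_sdiff] at this ⊢; tauto
  have key : (2 * v : ℕ∞) ≤ 4 * ω := calc
    (2 * v : ℕ∞) = (Icc 1 v).encard + (Icc 1 v).encard := by rw [encard_Icc_one]; ring
    _ ≤ (A.encard + Q.encard + (P \ A).encard + (R \ A).encard) +
        (A.encard + Q.encard + (O \ Q).encard + (S \ Q).encard) :=
      add_le_add ((encard_le_encard h₁').trans (encard_union_union_union_le ..))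
        ((encard_le_encard h₂').trans (encard_union_union_union_le ..))
    _ = (A.encard + (P \ A).encard) + (A.encard + (R \ A).encard) +
        (Q.encard + (O \ Q).encard) + (Q.encard + (S \ Q).encard) := by ring
    _ ≤ ω + ω + ω + ω := by
      simp only [encard_add_encard_sdiff]
      gcongr
    _ = 4 * ω := by ring
  have : 2 * v ≤ 4 * ω := by exact_mod_cast key
  omega

lemma exists_adj_eq_of_mem_Icc {ι : Type*} {adj : ι → ι → Prop} {ord : ι → ℕ} {c : ι → ℕ}
    {i : ι} (hi : adj i i)
    (hc : c i = sInf {n : ℕ | 1 ≤ n ∧ ∀ j, j ≠ i → adj i j → ord j < ord i → c j ≠ n})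
    {m : ℕ} (hm : m ∈ Icc 1 (c i)) : ∃ j, adj i j ∧ c j = m := by
  rcases hm.2.eq_or_lt with rfl | hlt
  · exact ⟨i, hi, rfl⟩
  by_contra! h
  rw [hc] at hlt
  exact Nat.notMem_of_lt_sInf hlt ⟨hm.1, fun j _ hj _ => h j hj⟩

lemma encard_image_le_of_pairwise {ι α : Type*} {ω : ℕ} {r : ι → ι → Prop} {C : ι → Fin ω}
    (hC : ∀ i j, i ≠ j → r i j → C i ≠ C j) (c : ι → α) {S : Set ι} (hS : S.Pairwise r) :
    (c '' S).encard ≤ ω := calc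
  (c '' S).encard ≤ S.encard := encard_image_le c S
  _ = (C '' S).encard :=
    (InjOn.encard_image fun i hi j hj h => by_contra fun hij => hC i j hij (hS hi hj hij) h).symm
  _ ≤ ω := encard_le_card.trans (by simp)

def unitIv (n : ℤ) : Bool → Set ℝ
  | true => Icc n (n + 1)
  | false => Ioo n (n + 1)

lemma exists_eq_unitIv {s : Set ℝ}
    (h : ∃ n : ℤ, s = Icc (n : ℝ) (n + 1) ∨ s = Ioo (n : ℝ) (n + 1)) :
    ∃ n b, s = unitIv n b := by
  obtain ⟨n, h | h⟩ := h
  exacts [⟨n, true, h⟩, ⟨n, false, h⟩]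

lemma unitIv_subset_Icc (n : ℤ) (b : Bool) : unitIv n b ⊆ Icc (n : ℝ) (n + 1) := by
  cases b
  exacts [Ioo_subset_Icc_self, subset_rfl]

lemma left_mem_unitIv_iff {n : ℤ} {b : Bool} : (n : ℝ) ∈ unitIv n b ↔ b = true := by
  cases b <;> simp [unitIv]

lemma right_mem_unitIv_iff {n : ℤ} {b : Bool} : (n + 1 : ℝ) ∈ unitIv n b ↔ b = true := by
  cases b <;> simp [unitIv]

lemma add_half_mem_unitIv (n : ℤ) (b : Bool) : (n + 1 / 2 : ℝ) ∈ unitIv n b := by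
  cases b <;> simp only [unitIv, mem_Icc, mem_Ioo] <;> constructor <;> linarith

lemma unitIv_inter_nonempty_iff {n m : ℤ} {b b' : Bool} :
    (unitIv n b ∩ unitIv m b').Nonempty ↔
      m = n ∨ b = true ∧ b' = true ∧ (m = n + 1 ∨ m = n - 1) := by
  constructor
  · rintro ⟨x, hx, hy⟩
    have hx' := unitIv_subset_Icc n b hx
    have hy' := unitIv_subset_Icc m b' hy
    have h₁ : m ≤ n + 1 := by exact_mod_cast hy'.1.trans hx'.2
    have h₂ : n ≤ m + 1 := by exact_mod_cast hx'.1.trans hy'.2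
    rcases (by omega : m = n ∨ m = n + 1 ∨ m = n - 1) with h | rfl | h
    · exact Or.inl h
    · have hxn : x = n + 1 := le_antisymm hx'.2 (by exact_mod_cast hy'.1)
      subst hxn
      exact Or.inr ⟨right_mem_unitIv_iff.1 hx, left_mem_unitIv_iff.1 (by exact_mod_cast hy),
        by simp⟩
    · obtain rfl : n = m + 1 := by omega
      have hxm : x = m + 1 := le_antisymm hy'.2 (by exact_mod_cast hx'.1)
      subst hxm
      exact Or.inr ⟨left_mem_unitIv_iff.1 (by exact_mod_cast hx), right_mem_unitIv_iff.1 hy,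
        by simp⟩
  · rintro (rfl | ⟨rfl, rfl, rfl | rfl⟩)
    · exact ⟨_, add_half_mem_unitIv _ _, add_half_mem_unitIv _ _⟩
    · exact ⟨n + 1, right_mem_unitIv_iff.2 rfl, by exact_mod_cast left_mem_unitIv_iff.2 rfl⟩
    · refine ⟨n, left_mem_unitIv_iff.2 rfl, ?_⟩
      simpa using (right_mem_unitIv_iff (n := n - 1)).2 rfl

lemma unitIv_nonempty (n : ℤ) (b : Bool) : (unitIv n b).Nonempty :=
  ⟨_, add_half_mem_unitIv n b⟩

structure FirstFitProfile (ω : ℕ) where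
  A : ℤ → Set ℕ
  B : ℤ → Set ℕ
  encard_A_union_A_succ_le : ∀ j, (A j ∪ A (j + 1)).encard ≤ ω
  encard_A_union_B_le : ∀ j, (A j ∪ B j).encard ≤ ω
  Icc_subset_of_mem_A : ∀ {j v}, v ∈ A j → Icc 1 v ⊆ A (j - 1) ∪ A j ∪ A (j + 1) ∪ B j
  Icc_subset_of_mem_B : ∀ {j v}, v ∈ B j → Icc 1 v ⊆ A j ∪ B j

namespace FirstFitProfile

variable {ω : ℕ} (P : FirstFitProfile ω) {i j : ℤ} {v s : ℕ}

lemma le_of_mem_B (hv : v ∈ P.B j) : v ≤ ω := by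
  have : (v : ℕ∞) ≤ ω := by
    rw [← encard_Icc_one]
    exact (encard_le_encard (P.Icc_subset_of_mem_B hv)).trans (P.encard_A_union_B_le j)
  exact_mod_cast this

lemma encard_A_le (j : ℤ) : (P.A j).encard ≤ ω :=
  (encard_le_encard subset_union_left).trans (P.encard_A_union_B_le j)

lemma encard_A_union_A_le (hij : i = j + 1 ∨ i = j - 1) : (P.A j ∪ P.A i).encard ≤ ω := by
  rcases hij with rfl | rfl
  · exact P.encard_A_union_A_succ_le j
  · rw [union_comm]
    simpa using P.encard_A_union_A_succ_le (j - 1)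

/-- `2 * j - i` is the other neighbour of `j`. -/
lemma Icc_subset_of_mem_A_of_adj (hij : i = j + 1 ∨ i = j - 1) (hv : v ∈ P.A j) :
    Icc 1 v ⊆ P.A j ∪ P.A i ∪ P.A (2 * j - i) ∪ P.B j := by
  intro m hm
  have := P.Icc_subset_of_mem_A hv hm
  rcases hij with rfl | rfl
  · rw [show 2 * j - (j + 1) = j - 1 by ring]
    simp only [mem_union] at this ⊢; tauto
  · rw [show 2 * j - (j - 1) = j + 1 by ring]
    simp only [mem_union] at this ⊢; tauto

lemma Icc_subset_union_Icc (hv : v ∈ P.A j) (hs : ω ≤ s)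
    (hmax : ∀ m ∈ P.A (j - 1) ∪ P.A (j + 1), m ≤ v → m ≤ s) :
    Icc 1 v ⊆ P.A j ∪ Icc 1 s := by
  intro m hm
  by_cases hmω : m ≤ ω
  · exact Or.inr ⟨hm.1, hmω.trans hs⟩
  rcases P.Icc_subset_of_mem_A hv hm with ((hA | hA) | hA) | hB
  · exact Or.inr ⟨hm.1, hmax m (Or.inl hA) hm.2⟩
  · exact Or.inl hA
  · exact Or.inr ⟨hm.1, hmax m (Or.inr hA) hm.2⟩
  · exact absurd (P.le_of_mem_B hB) hmω

lemma le_two_mul_of_mem_A (hv : v ∈ P.A j) : v ≤ 2 * ω := by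
  obtain ⟨s, hsT, hs_max⟩ := exists_max_image (insert ω ((P.A (j - 1) ∪ P.A (j + 1)) ∩ Iic v)) id
    (((finite_Iic v).inter_of_right _).insert ω) (insert_nonempty _ _)
  have hsub : Icc 1 v ⊆ P.A j ∪ Icc 1 s :=
    P.Icc_subset_union_Icc hv (hs_max ω (mem_insert _ _)) fun m hm hmv =>
      hs_max m (mem_insert_of_mem _ ⟨hm, hmv⟩)
  rcases hsT with hsω | ⟨hs, -⟩
  · rw [hsω] at hsub
    have : (v : ℕ∞) ≤ 2 * ω := calc
      (v : ℕ∞) = (Icc 1 v).encard := (encard_Icc_one v).symm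
      _ ≤ (P.A j).encard + (Icc 1 ω).encard := (encard_le_encard hsub).trans (encard_union_le ..)
      _ ≤ ω + ω := by rw [encard_Icc_one]; grw [P.encard_A_le j]
      _ = 2 * ω := by ring
    exact_mod_cast this
  obtain ⟨i, hij, hsi⟩ : ∃ i, (i = j + 1 ∨ i = j - 1) ∧ s ∈ P.A i := by
    rcases hs with hs | hs
    exacts [⟨j - 1, Or.inr rfl, hs⟩, ⟨j + 1, Or.inl rfl, hs⟩]
  have hji : j = i + 1 ∨ j = i - 1 := by omega
  refine le_two_mul_of_Icc_subset (P.Icc_subset_of_mem_A_of_adj hij hv) (fun m hm => ?_)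
    (P.encard_A_union_A_le (i := 2 * j - i) (by omega)) (P.encard_A_union_B_le j)
    (P.encard_A_union_A_le (i := 2 * i - j) (by omega)) (P.encard_A_union_B_le i)
  rcases hsub hm with hm | hm
  · exact Or.inl (Or.inl (Or.inl hm))
  · have := P.Icc_subset_of_mem_A_of_adj hji hsi hm
    simp only [mem_union] at this ⊢; tauto

end FirstFitProfile

section UnitIntervals

variable {ι : Type*} {f : ι → Set ℝ} {base : ι → ℤ} {closed : ι → Bool}

def colorsAt (c : ι → ℕ) (base : ι → ℤ) (closed : ι → Bool) (j : ℤ) (b : Bool) : Set ℕ :=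
  c '' {k | base k = j ∧ closed k = b}

def FirstFitProfile.ofUnitIntervals {ω : ℕ} (hf : ∀ k, f k = unitIv (base k) (closed k))
    {C : ι → Fin ω} (hC : ∀ i j, i ≠ j → (f i ∩ f j).Nonempty → C i ≠ C j) {c : ι → ℕ}
    (hff : ∀ k, ∀ m ∈ Icc 1 (c k), ∃ k', (f k ∩ f k').Nonempty ∧ c k' = m) :
    FirstFitProfile ω where
  A j := colorsAt c base closed j true
  B j := colorsAt c base closed j false
  encard_A_union_A_succ_le j := by
    rw [colorsAt, colorsAt, ← image_union]
    refine encard_image_le_of_pairwise hC c fun k hk k' hk' _ => ?_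
    change (f k ∩ f k').Nonempty
    rw [hf, hf, unitIv_inter_nonempty_iff]
    rcases hk with ⟨hk, hkc⟩ | ⟨hk, hkc⟩ <;> rcases hk' with ⟨hk', hkc'⟩ | ⟨hk', hkc'⟩ <;>
      simp only [hkc, hkc', true_and] <;> omega
  encard_A_union_B_le j := by
    rw [colorsAt, colorsAt, ← image_union]
    refine encard_image_le_of_pairwise hC c fun k hk k' hk' _ => ?_
    change (f k ∩ f k').Nonempty
    rw [hf, hf, unitIv_inter_nonempty_iff]
    left
    rcases hk with ⟨hk, -⟩ | ⟨hk, -⟩ <;> rcases hk' with ⟨hk', -⟩ | ⟨hk', -⟩ <;> omega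
  Icc_subset_of_mem_A := by
    rintro j - ⟨k, ⟨rfl, hk⟩, rfl⟩ m hm
    obtain ⟨k', hadj, rfl⟩ := hff k m hm
    rw [hf, hf, unitIv_inter_nonempty_iff] at hadj
    rcases hadj with h | ⟨-, hk', h | h⟩
    · cases hb : closed k'
      · exact Or.inr ⟨k', ⟨h, hb⟩, rfl⟩
      · exact Or.inl (Or.inl (Or.inr ⟨k', ⟨h, hb⟩, rfl⟩))
    · exact Or.inl (Or.inr ⟨k', ⟨h, hk'⟩, rfl⟩)
    · exact Or.inl (Or.inl (Or.inl ⟨k', ⟨h, hk'⟩, rfl⟩))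
  Icc_subset_of_mem_B := by
    rintro j - ⟨k, ⟨rfl, hk⟩, rfl⟩ m hm
    obtain ⟨k', hadj, rfl⟩ := hff k m hm
    rw [hf, hf, unitIv_inter_nonempty_iff, hk] at hadj
    obtain h | ⟨⟨⟩, -⟩ := hadj
    cases hb : closed k'
    · exact Or.inr ⟨k', ⟨h, hb⟩, rfl⟩
    · exact Or.inl ⟨k', ⟨h, hb⟩, rfl⟩

end UnitIntervals

theorem stmt8_general {ι : Type*} (f : ι → Set ℝ)
    (hunit : ∀ i, ∃ n : ℤ, f i = Set.Icc (n : ℝ) (n + 1) ∨ f i = Set.Ioo (n : ℝ) (n + 1))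
    (ω : ℕ) (C : ι → Fin ω)
    (hC : ∀ i j, i ≠ j → (f i ∩ f j).Nonempty → C i ≠ C j)
    (ord : ι → ℕ) (c : ι → ℕ)
    (hc : ∀ i, c i = sInf {n : ℕ | 1 ≤ n ∧
      ∀ j, j ≠ i → (f i ∩ f j).Nonempty → ord j < ord i → c j ≠ n})
    (x : ι) :
    c x ≤ 2 * ω := by
  choose base closed hf using fun i => exists_eq_unitIv (hunit i)
  have hff : ∀ k, ∀ m ∈ Icc 1 (c k), ∃ k', (f k ∩ f k').Nonempty ∧ c k' = m := fun k _ hm =>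
    exists_adj_eq_of_mem_Icc (adj := fun i j => (f i ∩ f j).Nonempty)
      (by rw [inter_self, hf]; exact unitIv_nonempty _ _) (hc k) hm
  let P := FirstFitProfile.ofUnitIntervals hf hC hff
  cases hx : closed x
  · exact (P.le_of_mem_B (j := base x) ⟨x, ⟨rfl, hx⟩, rfl⟩).trans (by omega)
  · exact P.le_two_mul_of_mem_A (j := base x) ⟨x, ⟨rfl, hx⟩, rfl⟩

/-- FirstFit on a family of open/closed unit intervals with integral endpoints
that is properly `ω`-colorable assigns every interval a color at most `2ω`. -/
theorem stmt8 {ι : Type*} (f : ι → Set ℝ)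
    (hunit : ∀ i, ∃ n : ℤ, f i = Set.Icc (n : ℝ) (n + 1) ∨ f i = Set.Ioo (n : ℝ) (n + 1))
    (ω : ℕ) (C : ι → Fin ω)
    (hC : ∀ i j, i ≠ j → (f i ∩ f j).Nonempty → C i ≠ C j)
    (ord : ι → ℕ) (hord : Function.Injective ord) (c : ι → ℕ)
    (hc : ∀ i, c i = sInf {n : ℕ | 1 ≤ n ∧
      ∀ j, j ≠ i → (f i ∩ f j).Nonempty → ord j < ord i → c j ≠ n})
    (x : ι) :
    c x ≤ 2 * ω :=
  stmt8_general f hunit ω C hC ord c hc x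
end

section
/- Let x = [a, a+1] be a closed unit interval and let y be a unit interval (open or closed) with y ∈ {[a-1, a], (a, a+1), [a+1, a+2]}. Then in any pairwise-disjoint family (row) of open/closed unit intervals containing three intervals that all intersect x, y intersects exactly one interval of that row. -/
open Set

def IsUnitIntervalAt (r : ℝ) (s : Set ℝ) : Prop :=
  s = Icc r (r + 1) ∨ s = Ioo r (r + 1)

namespace IsUnitIntervalAt

variable {r : ℝ} {s : Set ℝ}

lemma Ioo_subset (hs : IsUnitIntervalAt r s) : Ioo r (r + 1) ⊆ s := by
  rcases hs with rfl | rfl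
  exacts [Ioo_subset_Icc_self, subset_rfl]

lemma subset_Icc (hs : IsUnitIntervalAt r s) : s ⊆ Icc r (r + 1) := by
  rcases hs with rfl | rfl
  exacts [subset_rfl, Ioo_subset_Icc_self]

lemma one_le_abs_sub_of_inter_eq_empty {r' : ℝ} {t : Set ℝ} (hs : IsUnitIntervalAt r s)
    (ht : IsUnitIntervalAt r' t) (hst : s ∩ t = ∅) : 1 ≤ |r - r'| := by
  by_contra! h
  rw [abs_sub_lt_iff] at h
  have hne : (Ioo r (r + 1) ∩ Ioo r' (r' + 1)).Nonempty := by
    rw [Ioo_inter_Ioo, nonempty_Ioo, max_lt_iff, lt_min_iff, lt_min_iff]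
    refine ⟨⟨?_, ?_⟩, ?_, ?_⟩ <;> linarith
  exact hne.ne_empty (subset_eq_empty (inter_subset_inter hs.Ioo_subset ht.Ioo_subset) hst)

lemma mem_Icc_of_inter_Icc_nonempty {a : ℝ} (hs : IsUnitIntervalAt r s)
    (ha : (s ∩ Icc a (a + 1)).Nonempty) : r ∈ Icc (a - 1) (a + 1) := by
  obtain ⟨x, hxs, hxa, hxa'⟩ := ha
  obtain ⟨hrx, hxr⟩ := hs.subset_Icc hxs
  constructor <;> linarith

lemma eq_Icc_of_add_one_eq {a : ℝ} (hs : IsUnitIntervalAt r s) (hr : r + 1 = a)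
    (ha : (s ∩ Icc a (a + 1)).Nonempty) : s = Icc r a := by
  rcases hs with rfl | rfl
  · rw [hr]
  · obtain ⟨x, ⟨-, hx⟩, hax, -⟩ := ha
    linarith

lemma eq_Icc_of_eq_add_one {a : ℝ} (hs : IsUnitIntervalAt r s) (hr : r = a + 1)
    (ha : (s ∩ Icc a (a + 1)).Nonempty) : s = Icc r (r + 1) := by
  rcases hs with rfl | rfl
  · rfl
  · obtain ⟨x, ⟨hx, -⟩, -, hxa⟩ := ha
    linarith

lemma eq_Ioo_of_notMem (hs : IsUnitIntervalAt r s) (hr : r ∉ s) : s = Ioo r (r + 1) :=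
  hs.resolve_left fun h => hr (h ▸ left_mem_Icc.2 (by linarith))

end IsUnitIntervalAt

lemma subset_of_one_le_abs_sub {a r₁ r₂ r₃ : ℝ} (h₁ : r₁ ∈ Icc (a - 1) (a + 1))
    (h₂ : r₂ ∈ Icc (a - 1) (a + 1)) (h₃ : r₃ ∈ Icc (a - 1) (a + 1))
    (h₁₂ : 1 ≤ |r₁ - r₂|) (h₁₃ : 1 ≤ |r₁ - r₃|) (h₂₃ : 1 ≤ |r₂ - r₃|) :
    ({a - 1, a, a + 1} : Set ℝ) ⊆ {r₁, r₂, r₃} := by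
  simp only [mem_Icc] at h₁ h₂ h₃
  rw [le_abs] at h₁₂ h₁₃ h₂₃
  intro c hc
  simp only [mem_insert_iff, mem_singleton_iff] at hc ⊢
  grind

lemma Set.Pairwise.exists_unique_inter_nonempty_of_mem {α : Type*} {F : Set (Set α)}
    (hF : F.Pairwise fun s t => s ∩ t = ∅) {y : Set α} (hy : y ∈ F) (hy' : y.Nonempty) :
    ∃ s ∈ F, (s ∩ y).Nonempty ∧ ∀ t ∈ F, (t ∩ y).Nonempty → t = s :=
  ⟨y, hy, by rwa [inter_self], fun _ ht hty => by_contra fun h => hty.ne_empty (hF ht hy h)⟩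


section Row

variable {a : ℝ} {F : Set (Set ℝ)}

lemma exists_isUnitIntervalAt_of_three (hF : ∀ s ∈ F, IsUnitInterval s)
    (hdisj : F.Pairwise fun s t => s ∩ t = ∅) {s₁ s₂ s₃ : Set ℝ}
    (h₁ : s₁ ∈ F) (h₂ : s₂ ∈ F) (h₃ : s₃ ∈ F) (h₁₂ : s₁ ≠ s₂) (h₁₃ : s₁ ≠ s₃) (h₂₃ : s₂ ≠ s₃)
    (hi₁ : (s₁ ∩ Icc a (a + 1)).Nonempty) (hi₂ : (s₂ ∩ Icc a (a + 1)).Nonempty)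
    (hi₃ : (s₃ ∩ Icc a (a + 1)).Nonempty) :
    ∀ c ∈ ({a - 1, a, a + 1} : Set ℝ),
      ∃ s ∈ F, IsUnitIntervalAt c s ∧ (s ∩ Icc a (a + 1)).Nonempty := by
  obtain ⟨r₁, f₁⟩ : ∃ r, IsUnitIntervalAt r s₁ := hF s₁ h₁
  obtain ⟨r₂, f₂⟩ : ∃ r, IsUnitIntervalAt r s₂ := hF s₂ h₂
  obtain ⟨r₃, f₃⟩ : ∃ r, IsUnitIntervalAt r s₃ := hF s₃ h₃
  intro c hc
  rcases subset_of_one_le_abs_sub (f₁.mem_Icc_of_inter_Icc_nonempty hi₁)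
    (f₂.mem_Icc_of_inter_Icc_nonempty hi₂) (f₃.mem_Icc_of_inter_Icc_nonempty hi₃)
    (f₁.one_le_abs_sub_of_inter_eq_empty f₂ (hdisj h₁ h₂ h₁₂))
    (f₁.one_le_abs_sub_of_inter_eq_empty f₃ (hdisj h₁ h₃ h₁₃))
    (f₂.one_le_abs_sub_of_inter_eq_empty f₃ (hdisj h₂ h₃ h₂₃)) hc with rfl | rfl | rfl
  exacts [⟨s₁, h₁, f₁, hi₁⟩, ⟨s₂, h₂, f₂, hi₂⟩, ⟨s₃, h₃, f₃, hi₃⟩]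

lemma neighbours_subset_of_forall_exists_isUnitIntervalAt
    (hdisj : F.Pairwise fun s t => s ∩ t = ∅)
    (hex : ∀ c ∈ ({a - 1, a, a + 1} : Set ℝ),
      ∃ s ∈ F, IsUnitIntervalAt c s ∧ (s ∩ Icc a (a + 1)).Nonempty) :
    ({Icc (a - 1) a, Ioo a (a + 1), Icc (a + 1) (a + 2)} : Set (Set ℝ)) ⊆ F := by
  obtain ⟨L, hL, fL, iL⟩ := hex (a - 1) (by simp)
  obtain ⟨M, hM, fM, -⟩ := hex a (by simp)
  obtain ⟨R, hR, fR, iR⟩ := hex (a + 1) (by simp)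
  have eL : L = Icc (a - 1) a := fL.eq_Icc_of_add_one_eq (by ring) iL
  have eR : R = Icc (a + 1) (a + 2) := by
    rw [fR.eq_Icc_of_eq_add_one rfl iR]; ring_nf
  have hML : M ≠ L := by
    rintro rfl
    have : a + 1 / 2 ∈ M := fM.Ioo_subset ⟨by linarith, by linarith⟩
    rw [eL] at this
    linarith [this.2]
  -- `a` already lies in the closed interval `L`, so the interval starting at `a` must be open.
  have eM : M = Ioo a (a + 1) := fM.eq_Ioo_of_notMem fun haM =>
    (hdisj hM hL hML).subset ⟨haM, eL ▸ right_mem_Icc.2 (by linarith)⟩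
  rintro y (rfl | rfl | rfl)
  exacts [eL ▸ hL, eM ▸ hM, eR ▸ hR]

end Row

/-- If a pairwise-disjoint row of open/closed unit intervals contains three
intervals all intersecting `[a, a+1]`, then each of `[a-1, a]`, `(a, a+1)`,
`[a+1, a+2]` intersects exactly one interval of that row. -/
theorem stmt13 (a : ℝ) (y : Set ℝ)
    (hy : y ∈ ({Set.Icc (a - 1) a, Set.Ioo a (a + 1),
      Set.Icc (a + 1) (a + 2)} : Set (Set ℝ)))
    (F : Set (Set ℝ)) (hF : ∀ s ∈ F, IsUnitInterval s)
    (hdisj : F.Pairwise fun s t => s ∩ t = ∅)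
    (s₁ s₂ s₃ : Set ℝ) (h₁ : s₁ ∈ F) (h₂ : s₂ ∈ F) (h₃ : s₃ ∈ F)
    (h12 : s₁ ≠ s₂) (h13 : s₁ ≠ s₃) (h23 : s₂ ≠ s₃)
    (hi₁ : (s₁ ∩ Set.Icc a (a + 1)).Nonempty)
    (hi₂ : (s₂ ∩ Set.Icc a (a + 1)).Nonempty)
    (hi₃ : (s₃ ∩ Set.Icc a (a + 1)).Nonempty) :
    ∃ s ∈ F, (s ∩ y).Nonempty ∧ ∀ t ∈ F, (t ∩ y).Nonempty → t = s := by
  have hyF : y ∈ F := neighbours_subset_of_forall_exists_isUnitIntervalAt hdisj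
    (exists_isUnitIntervalAt_of_three hF hdisj h₁ h₂ h₃ h12 h13 h23 hi₁ hi₂ hi₃) hy
  have hy_ne : y.Nonempty := by
    rcases hy with rfl | rfl | rfl
    exacts [nonempty_Icc.2 (by linarith), nonempty_Ioo.2 (by linarith),
      nonempty_Icc.2 (by linarith)]
  exact hdisj.exists_unique_inter_nonempty_of_mem hyF hy_ne
end
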